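/- arXiv:1901.07716 — 5 statements merged into one kernel-verified Lean document; each statement's English description precedes it below -/
import Mathlib

section
/- Let α, β, κ > 0. Then the matrix M := α (L ⊗ I_m) + κ β H^d ∈ ℝ^{mn×mn} is symmetric positive definite; in particular its smallest eigenvalue λ₁ is strictly positive. -/
/-!
Both summands of `M` are positive semidefinite, so `M` is positive definite as soon as their
kernels meet only in `0`. If `(L ⊗ I_m) x = 0`, every column `x (·, j)` lies in `ker L`, hence is
constant: `x (i, j) = c j`. If moreover `H^d x = 0`, then `H i c = 0` for every `i`, so
`(∑ i, H i) c = 0` and `c = 0`.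
-/

open Matrix Kronecker
open scoped ComplexOrder

namespace Matrix

section BlockDiagonal

variable {R n m o : Type*} [DecidableEq o]

theorem of_ite_fst_eq_reindex_blockDiagonal [Zero R] (M : o → Matrix m n R) :
    (of fun (p : o × m) (q : o × n) => if p.1 = q.1 then M p.1 p.2 q.2 else 0) =
      reindex (.prodComm _ _) (.prodComm _ _) (blockDiagonal M) := by
  ext ⟨i, j⟩ ⟨i', j'⟩
  simp [blockDiagonal_apply]

variable [NonUnitalNonAssocSemiring R] [Fintype m] [Fintype o]

theorem blockDiagonal_mulVec_apply (M : o → Matrix n m R) (x : m × o → R) (i : n) (k : o) :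
    (blockDiagonal M *ᵥ x) (i, k) = (M k *ᵥ fun j => x (j, k)) i := by
  simp only [mulVec, dotProduct, blockDiagonal_apply, Fintype.sum_prod_type]
  simp

theorem blockDiagonal_mulVec_eq_zero_iff (M : o → Matrix n m R) (x : m × o → R) :
    blockDiagonal M *ᵥ x = 0 ↔ ∀ k, M k *ᵥ (fun j => x (j, k)) = 0 := by
  simp only [funext_iff, Prod.forall, blockDiagonal_mulVec_apply, Pi.zero_apply]
  exact forall_comm

end BlockDiagonal

variable {𝕜 n : Type*} [RCLike 𝕜] [Fintype n]

theorem PosSemidef.posDef_add_of_forall_mulVec_eq_zero {A B : Matrix n n 𝕜}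
    (hA : A.PosSemidef) (hB : B.PosSemidef) (h : ∀ x, A *ᵥ x = 0 → B *ᵥ x = 0 → x = 0) :
    (A + B).PosDef := by
  refine .of_dotProduct_mulVec_pos (hA.isHermitian.add hB.isHermitian) fun x hx => ?_
  have hqA := hA.dotProduct_mulVec_nonneg x
  have hqB := hB.dotProduct_mulVec_nonneg x
  rw [add_mulVec, dotProduct_add]
  refine (add_nonneg hqA hqB).lt_of_ne' fun hsum => hx (h x ?_ ?_)
  · exact (hA.dotProduct_mulVec_zero_iff x).mp ((add_eq_zero_iff_of_nonneg hqA hqB).mp hsum).1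
  · exact (hB.dotProduct_mulVec_zero_iff x).mp ((add_eq_zero_iff_of_nonneg hqA hqB).mp hsum).2

theorem PosDef.eq_zero_of_forall_mulVec_eq_zero {ι : Type*} [Fintype ι] {H : ι → Matrix n n 𝕜}
    (hH : (∑ i, H i).PosDef) {c : n → 𝕜} (hc : ∀ i, H i *ᵥ c = 0) : c = 0 := by
  by_contra hne
  simpa [sum_mulVec, hc] using hH.dotProduct_mulVec_pos hne

theorem PosSemidef.blockDiagonal {o : Type*} [Fintype o] [DecidableEq o]
    {M : o → Matrix n n 𝕜} (hM : ∀ k, (M k).PosSemidef) : (blockDiagonal M).PosSemidef := by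
  classical
  open scoped MatrixOrder in
  choose A hA using fun k => CStarAlgebra.nonneg_iff_eq_star_mul_self.mp (hM k).nonneg
  simp only [funext hA, star_eq_conjTranspose]
  rw [blockDiagonal_mul, ← blockDiagonal_conjTranspose]
  exact posSemidef_conjTranspose_mul_self _

end Matrix

theorem stmt0_general {n m : ℕ}
    (L : Matrix (Fin n) (Fin n) ℝ)
    (hLsym : L.PosSemidef)
    (hLconn : ∀ x : Fin n → ℝ, L *ᵥ x = 0 → ∃ c : ℝ, x = fun _ => c)
    (H : Fin n → Matrix (Fin m) (Fin m) ℝ)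
    (hH : ∀ i, (H i).PosSemidef)
    (hHsum : (∑ i, H i).PosDef)
    (α β κ : ℝ) (hα : 0 < α) (hβ : 0 < β) (hκ : 0 < κ)
    (Hd : Matrix (Fin n × Fin m) (Fin n × Fin m) ℝ)
    (hHd : Hd = Matrix.of fun p q => if p.1 = q.1 then H p.1 p.2 q.2 else 0)
    (M : Matrix (Fin n × Fin m) (Fin n × Fin m) ℝ)
    (hM : M = α • (L ⊗ₖ (1 : Matrix (Fin m) (Fin m) ℝ)) + (κ * β) • Hd) :
    M.PosDef ∧ ∀ (hHerm : M.IsHermitian) (i : Fin n × Fin m), 0 < hHerm.eigenvalues i := by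
  rw [of_ite_fst_eq_reindex_blockDiagonal] at hHd
  have hκβ : 0 < κ * β := mul_pos hκ hβ
  have hLpsd : (α • (L ⊗ₖ (1 : Matrix (Fin m) (Fin m) ℝ))).PosSemidef :=
    (hLsym.kronecker .one).smul hα.le
  have hHpsd : ((κ * β) • Hd).PosSemidef :=
    hHd ▸ ((PosSemidef.blockDiagonal hH).submatrix _).smul hκβ.le
  have hMpd : M.PosDef := by
    rw [hM]
    refine hLpsd.posDef_add_of_forall_mulVec_eq_zero hHpsd fun x hLx hHx => ?_
    rw [smul_mulVec, smul_eq_zero, kronecker_one, blockDiagonal_mulVec_eq_zero_iff] at hLx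
    rw [smul_mulVec, smul_eq_zero, hHd, reindex_apply, submatrix_mulVec_equiv] at hHx
    choose c hc using fun j => hLconn _ (hLx.resolve_left hα.ne' j)
    have hxc : ∀ i j, x (i, j) = c j := fun i j => congrFun (hc j) i
    have hHx' : ∀ i, H i *ᵥ (fun j => x (i, j)) = 0 :=
      (blockDiagonal_mulVec_eq_zero_iff H (x ∘ Prod.swap)).mp <|
        funext fun p => by simpa using congrFun (hHx.resolve_left hκβ.ne') p.swap
    have hHc : ∀ i, H i *ᵥ c = 0 := fun i => by simpa [hxc] using hHx' i
    ext ⟨i, j⟩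
    simp only [hxc, hHsum.eq_zero_of_forall_mulVec_eq_zero hHc, Pi.zero_apply]
  exact ⟨hMpd, fun _ => hMpd.eigenvalues_pos⟩

/-- For α, β, κ > 0, the matrix M := α (L ⊗ I_m) + κβ H^d is
symmetric positive definite; in particular all its eigenvalues (hence the
smallest one λ₁) are strictly positive. -/
theorem stmt0 {n m : ℕ}
    (L : Matrix (Fin n) (Fin n) ℝ)
    (hLsym : L.PosSemidef)
    (hL1 : L *ᵥ (fun _ => (1 : ℝ)) = 0)
    (hLconn : ∀ x : Fin n → ℝ, L *ᵥ x = 0 → ∃ c : ℝ, x = fun _ => c)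
    (H : Fin n → Matrix (Fin m) (Fin m) ℝ)
    (hH : ∀ i, (H i).PosSemidef)
    (hHsum : (∑ i, H i).PosDef)
    (α β κ : ℝ) (hα : 0 < α) (hβ : 0 < β) (hκ : 0 < κ)
    (Hd : Matrix (Fin n × Fin m) (Fin n × Fin m) ℝ)
    (hHd : Hd = Matrix.of fun p q => if p.1 = q.1 then H p.1 p.2 q.2 else 0)
    (M : Matrix (Fin n × Fin m) (Fin n × Fin m) ℝ)
    (hM : M = α • (L ⊗ₖ (1 : Matrix (Fin m) (Fin m) ℝ)) + (κ * β) • Hd) :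
    M.PosDef ∧ ∀ (hHerm : M.IsHermitian) (i : Fin n × Fin m), 0 < hHerm.eigenvalues i :=
  stmt0_general L hLsym hLconn H hH hHsum α β κ hα hβ hκ Hd hHd M hM
end

section
/- If ζ ∈ ℝ^{mn} is a nonzero vector with ζ' (L ⊗ I_m) ζ = 0 and ζ' H^d ζ = 0, then ζ = 1_n ⊗ ζ₁ for some nonzero ζ₁ ∈ ℝ^m satisfying ζ₁' (Σ_{i=1}^n H_i) ζ₁ = 0; consequently no such nonzero ζ exists when Σ_{i=1}^n H_i is positive definite. -/
/-!
Since `L ⊗ I_m` is positive semidefinite, `ζ' (L ⊗ I_m) ζ = 0` forces `(L ⊗ I_m) ζ = 0`, i.e.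
`L` annihilates each of the `m` coordinate slices `i ↦ ζ (i, j)`; connectivity makes every slice
constant, so `ζ = 1_n ⊗ ζ₁`. For such a vector the block-diagonal form collapses to
`ζ' H^d ζ = Σᵢ ζ₁' Hᵢ ζ₁ = ζ₁' (Σᵢ Hᵢ) ζ₁`, which a positive definite sum cannot make vanish.
-/

open Matrix Kronecker

namespace Matrix

variable {R ι m : Type*} [Fintype ι] [Fintype m]

/-- `diag(H_1, …, H_n)` on `ι × m`, with the block index first (Mathlib's `blockDiagonal` puts
it second). -/
def blockDiagFst [Zero R] [DecidableEq ι] (H : ι → Matrix m m R) : Matrix (ι × m) (ι × m) R :=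
  of fun p q => if p.1 = q.1 then H p.1 p.2 q.2 else 0

theorem blockDiagFst_mulVec_comp_snd [NonUnitalNonAssocSemiring R] [DecidableEq ι]
    (H : ι → Matrix m m R) (v : m → R) :
    blockDiagFst H *ᵥ (fun p => v p.2) = fun p => (H p.1 *ᵥ v) p.2 := by
  ext ⟨i, j⟩
  simp [blockDiagFst, mulVec, dotProduct, Fintype.sum_prod_type, ite_mul]

theorem comp_snd_dotProduct_blockDiagFst_mulVec_comp_snd [NonUnitalCommSemiring R]
    [DecidableEq ι] (H : ι → Matrix m m R) (v : m → R) :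
    (fun p : ι × m => v p.2) ⬝ᵥ (blockDiagFst H *ᵥ fun p => v p.2) =
      v ⬝ᵥ ((∑ i, H i) *ᵥ v) := by
  rw [blockDiagFst_mulVec_comp_snd, sum_mulVec, dotProduct_sum]
  simp only [dotProduct, Fintype.sum_prod_type]

theorem kronecker_one_mulVec_eq_zero_iff [CommSemiring R] [DecidableEq m] (A : Matrix ι ι R)
    (ζ : ι × m → R) :
    (A ⊗ₖ (1 : Matrix m m R)) *ᵥ ζ = 0 ↔ ∀ j, A *ᵥ (fun i => ζ (i, j)) = 0 := by
  have hvec : ζ = vec (of fun j i => ζ (i, j)) := rfl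
  rw [hvec, kronecker_mulVec_vec, Matrix.one_mul, vec_eq_zero_iff]
  refine ⟨fun h j => ?_, fun h => ?_⟩
  · rw [← vecMul_transpose]
    exact congrFun h j
  · ext j i
    simpa [mul_apply, mulVec, dotProduct, mul_comm] using congrFun (h j) i

theorem exists_eq_comp_snd_of_kronecker_one_mulVec_eq_zero [CommSemiring R] [DecidableEq m]
    {A : Matrix ι ι R} (hker : ∀ x : ι → R, A *ᵥ x = 0 → ∃ c : R, x = fun _ => c)
    {ζ : ι × m → R} (hζ : (A ⊗ₖ (1 : Matrix m m R)) *ᵥ ζ = 0) :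
    ∃ v : m → R, ζ = fun p => v p.2 := by
  choose v hv using fun j => hker _ ((kronecker_one_mulVec_eq_zero_iff A ζ).mp hζ j)
  exact ⟨v, funext fun p => congrFun (hv p.2) p.1⟩

end Matrix

theorem stmt1_general {n m : ℕ}
    (L : Matrix (Fin n) (Fin n) ℝ)
    (hLsym : L.PosSemidef)
    (hLconn : ∀ x : Fin n → ℝ, L *ᵥ x = 0 → ∃ c : ℝ, x = fun _ => c)
    (H : Fin n → Matrix (Fin m) (Fin m) ℝ)
    (Hd : Matrix (Fin n × Fin m) (Fin n × Fin m) ℝ)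
    (hHd : Hd = Matrix.of fun p q => if p.1 = q.1 then H p.1 p.2 q.2 else 0)
    (ζ : Fin n × Fin m → ℝ) (hζ : ζ ≠ 0)
    (hLζ : ζ ⬝ᵥ ((L ⊗ₖ (1 : Matrix (Fin m) (Fin m) ℝ)) *ᵥ ζ) = 0)
    (hHζ : ζ ⬝ᵥ (Hd *ᵥ ζ) = 0) :
    (∃ ζ₁ : Fin m → ℝ, ζ₁ ≠ 0 ∧ ζ = (fun p => ζ₁ p.2) ∧
      ζ₁ ⬝ᵥ ((∑ i, H i) *ᵥ ζ₁) = 0) ∧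
    ((∑ i, H i).PosDef → False) := by
  have hker : (L ⊗ₖ (1 : Matrix (Fin m) (Fin m) ℝ)) *ᵥ ζ = 0 :=
    ((hLsym.kronecker PosSemidef.one).dotProduct_mulVec_zero_iff ζ).mp hLζ
  obtain ⟨ζ₁, rfl⟩ := exists_eq_comp_snd_of_kronecker_one_mulVec_eq_zero hLconn hker
  have hζ₁ : ζ₁ ≠ 0 := by
    rintro rfl
    exact hζ rfl
  have hsum : ζ₁ ⬝ᵥ ((∑ i, H i) *ᵥ ζ₁) = 0 := by
    rw [← comp_snd_dotProduct_blockDiagFst_mulVec_comp_snd, blockDiagFst, ← hHd, hHζ]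
  refine ⟨⟨ζ₁, hζ₁, rfl, hsum⟩, fun hPD => ?_⟩
  simpa [hsum] using hPD.dotProduct_mulVec_pos hζ₁

/-- If ζ ≠ 0 satisfies ζ'(L ⊗ I_m)ζ = 0 and ζ' H^d ζ = 0, then
ζ = 1_n ⊗ ζ₁ for some nonzero ζ₁ with ζ₁'(Σᵢ Hᵢ)ζ₁ = 0; consequently no such
nonzero ζ exists when Σᵢ Hᵢ is positive definite. -/
theorem stmt1 {n m : ℕ}
    (L : Matrix (Fin n) (Fin n) ℝ)
    (hLsym : L.PosSemidef)
    (hL1 : L *ᵥ (fun _ => (1 : ℝ)) = 0)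
    (hLconn : ∀ x : Fin n → ℝ, L *ᵥ x = 0 → ∃ c : ℝ, x = fun _ => c)
    (H : Fin n → Matrix (Fin m) (Fin m) ℝ)
    (hH : ∀ i, (H i).PosSemidef)
    (Hd : Matrix (Fin n × Fin m) (Fin n × Fin m) ℝ)
    (hHd : Hd = Matrix.of fun p q => if p.1 = q.1 then H p.1 p.2 q.2 else 0)
    (ζ : Fin n × Fin m → ℝ) (hζ : ζ ≠ 0)
    (hLζ : ζ ⬝ᵥ ((L ⊗ₖ (1 : Matrix (Fin m) (Fin m) ℝ)) *ᵥ ζ) = 0)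
    (hHζ : ζ ⬝ᵥ (Hd *ᵥ ζ) = 0) :
    (∃ ζ₁ : Fin m → ℝ, ζ₁ ≠ 0 ∧ ζ = (fun p => ζ₁ p.2) ∧
      ζ₁ ⬝ᵥ ((∑ i, H i) *ᵥ ζ₁) = 0) ∧
    ((∑ i, H i).PosDef → False) :=
  stmt1_general L hLsym hLconn H Hd hHd ζ hζ hLζ hHζ
end

section
/- Let α, β, κ > 0, b ∈ ℝ^{mn}, z* ∈ ℝ^m, and let v_eq ∈ ℝ^{mn} satisfy −κβ (H^d (1_n ⊗ z*) − b) = α (L ⊗ I_m) v_eq. Suppose z̃, v : ℝ → ℝ^{mn} are differentiable and solve the averaged closed-loop system z̃'(t) = −α (L ⊗ I_m)(z̃(t) + v(t)) − κβ (H^d (z̃(t) + 1_n ⊗ z*) − b) and v'(t) = (L ⊗ I_m) z̃(t). Then the function V(t) = (1/2)(‖z̃(t)‖² + α‖v(t) − v_eq‖²) is differentiable with V'(t) = −z̃(t)' M z̃(t) for all t, where M = α (L ⊗ I_m) + κβ H^d. -/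
/-!
Differentiating `V` gives `z̃' ⬝ᵥ z̃ + α (v - v_eq) ⬝ᵥ (L ⊗ I) z̃`. By the equilibrium equation for
`v_eq`, the constant forcing in `z̃'` equals `α (L ⊗ I) v_eq`, so `z̃' = -M z̃ - α (L ⊗ I)(v - v_eq)`.
Since `L ⊗ I` is symmetric, the pairing of the last term with `z̃` cancels the contribution of `v`,
leaving `-z̃ ⬝ᵥ M z̃`.
-/

open Matrix Kronecker

theorem HasDerivAt.dotProduct {ι : Type*} [Fintype ι] {f g : ℝ → ι → ℝ} {f' g' : ι → ℝ}
    {t : ℝ} (hf : HasDerivAt f f' t) (hg : HasDerivAt g g' t) :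
    HasDerivAt (fun s => f s ⬝ᵥ g s) (f' ⬝ᵥ g t + f t ⬝ᵥ g') t := by
  have h := HasDerivAt.fun_sum (u := Finset.univ)
    fun i _ => (hasDerivAt_pi.mp hf i).fun_mul (hasDerivAt_pi.mp hg i)
  rwa [Finset.sum_add_distrib] at h

theorem HasDerivAt.dotProduct_self {ι : Type*} [Fintype ι] {f : ℝ → ι → ℝ} {f' : ι → ℝ}
    {t : ℝ} (hf : HasDerivAt f f' t) :
    HasDerivAt (fun s => f s ⬝ᵥ f s) (2 * (f' ⬝ᵥ f t)) t := by
  refine (hf.dotProduct hf).congr_deriv ?_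
  rw [dotProduct_comm (f t) f']
  ring

theorem Matrix.IsSymm.kronecker {R l n : Type*} [Mul R] {A : Matrix l l R} {B : Matrix n n R}
    (hA : A.IsSymm) (hB : B.IsSymm) : (A ⊗ₖ B).IsSymm := by
  rw [IsSymm, ← kroneckerMap_transpose, hA.eq, hB.eq]

theorem Matrix.IsSymm.mulVec_dotProduct {ι : Type*} [Fintype ι] {A : Matrix ι ι ℝ}
    (hA : A.IsSymm) (x y : ι → ℝ) : (A *ᵥ x) ⬝ᵥ y = x ⬝ᵥ (A *ᵥ y) := by
  rw [dotProduct_mulVec, ← vecMul_transpose, hA.eq]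

section ClosedLoop

variable {ι : Type*} [Fintype ι] (A B : Matrix ι ι ℝ) (α γ : ℝ) (b s veq : ι → ℝ)

theorem closedLoop_drift_eq (hveq : -(γ • (B *ᵥ s - b)) = α • (A *ᵥ veq)) (z w : ι → ℝ) :
    -(α • (A *ᵥ (z + w))) - γ • (B *ᵥ (z + s) - b) =
      -((α • A + γ • B) *ᵥ z) - α • (A *ᵥ (w - veq)) := by
  have : γ • (B *ᵥ (z + s) - b) = γ • (B *ᵥ z) - α • (A *ᵥ veq) := by
    rw [mulVec_add, add_sub_assoc, smul_add, neg_eq_iff_eq_neg.mp hveq, sub_eq_add_neg]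
  rw [this, add_mulVec, smul_mulVec, smul_mulVec, mulVec_add, mulVec_sub]
  module

theorem closedLoop_energy_identity (hA : A.IsSymm)
    (hveq : -(γ • (B *ᵥ s - b)) = α • (A *ᵥ veq)) (z w : ι → ℝ) :
    (-(α • (A *ᵥ (z + w))) - γ • (B *ᵥ (z + s) - b)) ⬝ᵥ z + α * ((w - veq) ⬝ᵥ (A *ᵥ z)) =
      -(z ⬝ᵥ ((α • A + γ • B) *ᵥ z)) := by
  rw [closedLoop_drift_eq A B α γ b s veq hveq, sub_dotProduct, neg_dotProduct,
    smul_dotProduct, hA.mulVec_dotProduct, dotProduct_comm _ z, smul_eq_mul]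
  ring

theorem closedLoop_hasDerivAt_lyapunov (hA : A.IsSymm)
    (hveq : -(γ • (B *ᵥ s - b)) = α • (A *ᵥ veq)) {z v : ℝ → ι → ℝ}
    (hz : ∀ t, HasDerivAt z (-(α • (A *ᵥ (z t + v t))) - γ • (B *ᵥ (z t + s) - b)) t)
    (hv : ∀ t, HasDerivAt v (A *ᵥ z t) t) (t : ℝ) :
    HasDerivAt (fun t => (1 / 2) * (z t ⬝ᵥ z t + α * ((v t - veq) ⬝ᵥ (v t - veq))))
      (-(z t ⬝ᵥ ((α • A + γ • B) *ᵥ z t))) t := by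
  refine ((((hz t).dotProduct_self).add
    (((hv t).sub_const veq).dotProduct_self.const_mul α)).const_mul (1 / 2)).congr_deriv ?_
  rw [← closedLoop_energy_identity A B α γ b s veq hA hveq, dotProduct_comm (A *ᵥ z t)]
  ring

end ClosedLoop

theorem stmt8_general {n m : ℕ}
    (L : Matrix (Fin n) (Fin n) ℝ)
    (hLsym : L.PosSemidef)
    (α β κ : ℝ)
    (Hd : Matrix (Fin n × Fin m) (Fin n × Fin m) ℝ)
    (Lm : Matrix (Fin n × Fin m) (Fin n × Fin m) ℝ)
    (hLm : Lm = L ⊗ₖ (1 : Matrix (Fin m) (Fin m) ℝ))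
    (b : Fin n × Fin m → ℝ) (zstar : Fin m → ℝ)
    (veq : Fin n × Fin m → ℝ)
    (hveq : -((κ * β) • (Hd *ᵥ (fun p => zstar p.2) - b)) = α • (Lm *ᵥ veq))
    (ztil v : ℝ → Fin n × Fin m → ℝ)
    (hz : ∀ t, HasDerivAt ztil
      (-(α • (Lm *ᵥ (ztil t + v t))) -
        (κ * β) • (Hd *ᵥ (ztil t + fun p => zstar p.2) - b)) t)
    (hv : ∀ t, HasDerivAt v (Lm *ᵥ ztil t) t)
    (V : ℝ → ℝ)
    (hV : ∀ t, V t = (1 / 2) *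
      (ztil t ⬝ᵥ ztil t + α * ((v t - veq) ⬝ᵥ (v t - veq))))
    (M : Matrix (Fin n × Fin m) (Fin n × Fin m) ℝ)
    (hM : M = α • Lm + (κ * β) • Hd) :
    ∀ t, HasDerivAt V (-(ztil t ⬝ᵥ (M *ᵥ ztil t))) t := by
  have hLm_symm : Lm.IsSymm :=
    hLm ▸ (isHermitian_iff_isSymm.mp hLsym.isHermitian).kronecker isSymm_one
  rw [funext hV, hM]
  exact closedLoop_hasDerivAt_lyapunov Lm Hd α (κ * β) b _ veq hLm_symm hveq hz hv

/-- Along solutions of the averaged closed-loop system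
z̃' = −α(L⊗I_m)(z̃+v) − κβ(H^d(z̃ + 1_n⊗z*) − b), v' = (L⊗I_m)z̃, with v_eq
satisfying −κβ(H^d(1_n⊗z*) − b) = α(L⊗I_m)v_eq, the Lyapunov function
V(t) = (1/2)(‖z̃(t)‖² + α‖v(t)−v_eq‖²) (squared Euclidean norms written as dot
products) satisfies V'(t) = −z̃(t)' M z̃(t) with M = α(L⊗I_m) + κβ H^d. -/
theorem stmt8 {n m : ℕ}
    (L : Matrix (Fin n) (Fin n) ℝ)
    (hLsym : L.PosSemidef)
    (hL1 : L *ᵥ (fun _ => (1 : ℝ)) = 0)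
    (hLconn : ∀ x : Fin n → ℝ, L *ᵥ x = 0 → ∃ c : ℝ, x = fun _ => c)
    (H : Fin n → Matrix (Fin m) (Fin m) ℝ)
    (hH : ∀ i, (H i).PosSemidef)
    (α β κ : ℝ) (hα : 0 < α) (hβ : 0 < β) (hκ : 0 < κ)
    (Hd : Matrix (Fin n × Fin m) (Fin n × Fin m) ℝ)
    (hHd : Hd = Matrix.of fun p q => if p.1 = q.1 then H p.1 p.2 q.2 else 0)
    (Lm : Matrix (Fin n × Fin m) (Fin n × Fin m) ℝ)
    (hLm : Lm = L ⊗ₖ (1 : Matrix (Fin m) (Fin m) ℝ))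
    (b : Fin n × Fin m → ℝ) (zstar : Fin m → ℝ)
    (veq : Fin n × Fin m → ℝ)
    (hveq : -((κ * β) • (Hd *ᵥ (fun p => zstar p.2) - b)) = α • (Lm *ᵥ veq))
    (ztil v : ℝ → Fin n × Fin m → ℝ)
    (hz : ∀ t, HasDerivAt ztil
      (-(α • (Lm *ᵥ (ztil t + v t))) -
        (κ * β) • (Hd *ᵥ (ztil t + fun p => zstar p.2) - b)) t)
    (hv : ∀ t, HasDerivAt v (Lm *ᵥ ztil t) t)
    (V : ℝ → ℝ)
    (hV : ∀ t, V t = (1 / 2) *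
      (ztil t ⬝ᵥ ztil t + α * ((v t - veq) ⬝ᵥ (v t - veq))))
    (M : Matrix (Fin n × Fin m) (Fin n × Fin m) ℝ)
    (hM : M = α • Lm + (κ * β) • Hd) :
    ∀ t, HasDerivAt V (-(ztil t ⬝ᵥ (M *ᵥ ztil t))) t :=
  stmt8_general L hLsym α β κ Hd Lm hLm b zstar veq hveq ztil v hz hv V hV M hM
end

section
/- Let α, β, κ, ϱ > 0, let ξ ∈ ℝ^{1×n} satisfy ξ L = 0 with all entries strictly positive, Ξ = diag(ξ), and suppose L·1_n = 0 and Σ_{i=1}^n H_i is positive definite. Let P = (α/2)[[ϱ³+2ϱ+(α+1)/(αϱ), 1+ϱ²],[1+ϱ², ϱ]] and Q = κβ [[1+ϱ², ϱ/2],[ϱ/2, 0]]. Then for every x of the form x = [1_n ⊗ ζ; 0_{mn}] with ζ ∈ ℝ^m, one has x' (P ⊗ (ΞL + L'Ξ) ⊗ I_m + Q ⊗ H^d) x = κβ(1+ϱ²) ζ' (Σ_{i=1}^n H_i) ζ, and hence there exists c₀ > 0 (e.g., c₀ = κβ(1+ϱ²)λ_min(Σ_i H_i)/n) such that −x' (P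 ⊗ (ΞL + L'Ξ) ⊗ I_m + Q ⊗ H^d) x ≤ −c₀ ‖x‖² for all such x. -/
/-!
Since `L 1 = 0` and `ξ L = 0`, the symmetrised Laplacian `ΞL + L'Ξ` annihilates `1_n`, so on a
consensus vector `[1_n ⊗ ζ; 0]` the whole `P`-term vanishes, whatever `P` is. Only the upper left
entry `κβ(1 + ϱ²)` of `Q` survives, paired with `(1_n ⊗ ζ)' H^d (1_n ⊗ ζ) = ζ' (Σᵢ Hᵢ) ζ`.
As `‖[1_n ⊗ ζ; 0]‖² = n ‖ζ‖²`, the smallest eigenvalue bound `ζ' (Σᵢ Hᵢ) ζ ≥ c ‖ζ‖²` gives the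
constant `c₀ = κβ(1 + ϱ²) c / n`.
-/

open Matrix Kronecker

section

variable {ι κ R : Type*} [Fintype ι] [Fintype κ] [CommSemiring R]

theorem dotProduct_kronecker_mulVec_upper_block (P : Matrix (Fin 2) (Fin 2) R)
    (M : Matrix ι ι R) (u : ι → R) :
    (fun q : Fin 2 × ι => ![u, 0] q.1 q.2) ⬝ᵥ ((P ⊗ₖ M) *ᵥ fun q => ![u, 0] q.1 q.2) =
      P 0 0 * (u ⬝ᵥ (M *ᵥ u)) := by
  simp only [dotProduct, mulVec, Fintype.sum_prod_type, Fin.sum_univ_two, kroneckerMap_apply,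
    cons_val_zero, cons_val_one, Pi.zero_apply, mul_zero, zero_mul, add_zero,
    Finset.sum_const_zero, Finset.mul_sum]
  exact Finset.sum_congr rfl fun _ _ => Finset.sum_congr rfl fun _ _ => by ring

theorem dotProduct_self_upper_block (u : ι → R) :
    (fun q : Fin 2 × ι => ![u, 0] q.1 q.2) ⬝ᵥ (fun q => ![u, 0] q.1 q.2) = u ⬝ᵥ u := by
  simp [dotProduct, Fintype.sum_prod_type]

theorem kronecker_mulVec_comp_snd_eq_zero {A : Matrix ι ι R} (hA : A *ᵥ (fun _ => 1) = 0)
    (B : Matrix κ κ R) (ζ : κ → R) : (A ⊗ₖ B) *ᵥ (fun p : ι × κ => ζ p.2) = 0 := by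
  ext ⟨i, j⟩
  have hrow : ∑ k, A i k = 0 := by simpa [mulVec, dotProduct] using congrFun hA i
  simp only [mulVec, dotProduct, Fintype.sum_prod_type, kroneckerMap_apply, Pi.zero_apply]
  simp_rw [mul_assoc, ← Finset.mul_sum, ← Finset.sum_mul, hrow, zero_mul]

theorem dotProduct_comp_snd_self (ζ : κ → R) :
    (fun p : ι × κ => ζ p.2) ⬝ᵥ (fun p => ζ p.2) = Fintype.card ι * (ζ ⬝ᵥ ζ) := by
  simp [dotProduct, Fintype.sum_prod_type]

theorem dotProduct_blockDiagonal_mulVec_comp_snd [DecidableEq ι] (H : ι → Matrix κ κ R)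
    (ζ : κ → R) :
    (fun p : ι × κ => ζ p.2) ⬝ᵥ
        (of (fun p q : ι × κ => if p.1 = q.1 then H p.1 p.2 q.2 else 0) *ᵥ fun p => ζ p.2) =
      ζ ⬝ᵥ ((∑ i, H i) *ᵥ ζ) := by
  simp only [dotProduct, mulVec, Fintype.sum_prod_type, of_apply, ite_mul, zero_mul,
    Finset.sum_ite_irrel, Finset.sum_const_zero, Finset.sum_ite_eq, Finset.mem_univ, if_true,
    Matrix.sum_apply, Finset.sum_mul, Finset.mul_sum]
  rw [Finset.sum_comm]
  exact Finset.sum_congr rfl fun _ _ => by rw [Finset.sum_comm]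

theorem diagonal_mul_add_transpose_mul_diagonal_mulVec_one [DecidableEq ι] {L : Matrix ι ι R}
    {ξ : ι → R} (hL : L *ᵥ (fun _ => 1) = 0) (hξ : ξ ᵥ* L = 0) :
    (diagonal ξ * L + Lᵀ * diagonal ξ) *ᵥ (fun _ => 1) = 0 := by
  have hξ1 : diagonal ξ *ᵥ (fun _ => 1) = ξ := by ext; simp [mulVec_diagonal]
  rw [add_mulVec, ← mulVec_mulVec, ← mulVec_mulVec, hL, hξ1, mulVec_zero, mulVec_transpose, hξ,
    zero_add]

end

open scoped MatrixOrder in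
theorem Matrix.PosDef.exists_pos_mul_dotProduct_self_le {ι : Type*} [Fintype ι] [DecidableEq ι]
    {A : Matrix ι ι ℝ} (hA : A.PosDef) : ∃ c > 0, ∀ v, c * (v ⬝ᵥ v) ≤ v ⬝ᵥ (A *ᵥ v) := by
  cases isEmpty_or_nonempty ι
  · exact ⟨1, one_pos, fun v => by simp [dotProduct]⟩
  obtain ⟨c, hc, hcA⟩ := (CFC.exists_pos_algebraMap_le_iff hA.isHermitian.isSelfAdjoint).2
    fun _ hx => (isStrictlyPositive_iff_posDef.2 hA).spectrum_pos hx
  refine ⟨c, hc, fun v => ?_⟩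
  have := (le_iff.1 hcA).dotProduct_mulVec_nonneg v
  simpa [Algebra.algebraMap_eq_smul_one, sub_mulVec, smul_mulVec, dotProduct_sub,
    dotProduct_smul] using this

theorem stmt13_general {n m : ℕ} (hn : 0 < n)
    (L : Matrix (Fin n) (Fin n) ℝ)
    (hL1 : L *ᵥ (fun _ => (1 : ℝ)) = 0)
    (ξ : Fin n → ℝ) (hξL : ξ ᵥ* L = 0)
    (H : Fin n → Matrix (Fin m) (Fin m) ℝ)
    (hHsum : (∑ i, H i).PosDef)
    (β κ ϱ : ℝ) (hβ : 0 < β) (hκ : 0 < κ)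
    (Hd : Matrix (Fin n × Fin m) (Fin n × Fin m) ℝ)
    (hHd : Hd = Matrix.of fun p q => if p.1 = q.1 then H p.1 p.2 q.2 else 0)
    (P Q : Matrix (Fin 2) (Fin 2) ℝ)
    (hQ : Q = (κ * β) • !![1 + ϱ ^ 2, ϱ / 2; ϱ / 2, 0])
    (S : Matrix (Fin 2 × (Fin n × Fin m)) (Fin 2 × (Fin n × Fin m)) ℝ)
    (hS : S = P ⊗ₖ (((Matrix.diagonal ξ) * L + Lᵀ * (Matrix.diagonal ξ)) ⊗ₖ
      (1 : Matrix (Fin m) (Fin m) ℝ)) + Q ⊗ₖ Hd)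
    (x : (Fin m → ℝ) → Fin 2 × (Fin n × Fin m) → ℝ)
    (hx : ∀ ζ : Fin m → ℝ, x ζ = fun q => ![(fun p : Fin n × Fin m => ζ p.2), 0] q.1 q.2) :
    (∀ ζ : Fin m → ℝ, x ζ ⬝ᵥ (S *ᵥ x ζ) =
      κ * β * (1 + ϱ ^ 2) * (ζ ⬝ᵥ ((∑ i, H i) *ᵥ ζ))) ∧
    ∃ c₀ > (0 : ℝ), ∀ ζ : Fin m → ℝ,
      -(x ζ ⬝ᵥ (S *ᵥ x ζ)) ≤ -c₀ * (x ζ ⬝ᵥ x ζ) := by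
  have hlap := diagonal_mul_add_transpose_mul_diagonal_mulVec_one hL1 hξL
  have hform (ζ : Fin m → ℝ) : x ζ ⬝ᵥ (S *ᵥ x ζ) =
      κ * β * (1 + ϱ ^ 2) * (ζ ⬝ᵥ ((∑ i, H i) *ᵥ ζ)) := by
    rw [hx, hS, add_mulVec, dotProduct_add, dotProduct_kronecker_mulVec_upper_block,
      dotProduct_kronecker_mulVec_upper_block, kronecker_mulVec_comp_snd_eq_zero hlap,
      dotProduct_zero, mul_zero, zero_add, hHd, dotProduct_blockDiagonal_mulVec_comp_snd, hQ]
    simp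
  refine ⟨hform, ?_⟩
  obtain ⟨c, hc, hcH⟩ := hHsum.exists_pos_mul_dotProduct_self_le
  refine ⟨κ * β * (1 + ϱ ^ 2) * c / n, by positivity, fun ζ => ?_⟩
  rw [hform, hx, dotProduct_self_upper_block, dotProduct_comp_snd_self, Fintype.card_fin,
    neg_mul, neg_le_neg_iff]
  calc κ * β * (1 + ϱ ^ 2) * c / n * (n * (ζ ⬝ᵥ ζ)) = κ * β * (1 + ϱ ^ 2) * (c * (ζ ⬝ᵥ ζ)) := by
        field_simp
    _ ≤ κ * β * (1 + ϱ ^ 2) * (ζ ⬝ᵥ ((∑ i, H i) *ᵥ ζ)) := by gcongr; exact hcH ζ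

/-- For every x = [1_n ⊗ ζ; 0], one has
x'(P ⊗ (ΞL + L'Ξ) ⊗ I_m + Q ⊗ H^d)x = κβ(1+ϱ²) ζ'(Σᵢ Hᵢ)ζ, and hence (when
Σᵢ Hᵢ is positive definite) there exists c₀ > 0 with
−x'(P ⊗ (ΞL + L'Ξ) ⊗ I_m + Q ⊗ H^d)x ≤ −c₀‖x‖² for all such x. -/
theorem stmt13 {n m : ℕ} (hn : 0 < n)
    (L : Matrix (Fin n) (Fin n) ℝ)
    (hL1 : L *ᵥ (fun _ => (1 : ℝ)) = 0)
    (ξ : Fin n → ℝ) (hξL : ξ ᵥ* L = 0) (hξpos : ∀ i, 0 < ξ i)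
    (H : Fin n → Matrix (Fin m) (Fin m) ℝ)
    (hH : ∀ i, (H i).PosSemidef)
    (hHsum : (∑ i, H i).PosDef)
    (α β κ ϱ : ℝ) (hα : 0 < α) (hβ : 0 < β) (hκ : 0 < κ) (hϱ : 0 < ϱ)
    (Hd : Matrix (Fin n × Fin m) (Fin n × Fin m) ℝ)
    (hHd : Hd = Matrix.of fun p q => if p.1 = q.1 then H p.1 p.2 q.2 else 0)
    (P Q : Matrix (Fin 2) (Fin 2) ℝ)
    (hP : P = (α / 2) • !![ϱ ^ 3 + 2 * ϱ + (α + 1) / (α * ϱ), 1 + ϱ ^ 2; 1 + ϱ ^ 2, ϱ])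
    (hQ : Q = (κ * β) • !![1 + ϱ ^ 2, ϱ / 2; ϱ / 2, 0])
    (S : Matrix (Fin 2 × (Fin n × Fin m)) (Fin 2 × (Fin n × Fin m)) ℝ)
    (hS : S = P ⊗ₖ (((Matrix.diagonal ξ) * L + Lᵀ * (Matrix.diagonal ξ)) ⊗ₖ
      (1 : Matrix (Fin m) (Fin m) ℝ)) + Q ⊗ₖ Hd)
    (x : (Fin m → ℝ) → Fin 2 × (Fin n × Fin m) → ℝ)
    (hx : ∀ ζ : Fin m → ℝ, x ζ = fun q => ![(fun p : Fin n × Fin m => ζ p.2), 0] q.1 q.2) :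
    (∀ ζ : Fin m → ℝ, x ζ ⬝ᵥ (S *ᵥ x ζ) =
      κ * β * (1 + ϱ ^ 2) * (ζ ⬝ᵥ ((∑ i, H i) *ᵥ ζ))) ∧
    ∃ c₀ > (0 : ℝ), ∀ ζ : Fin m → ℝ,
      -(x ζ ⬝ᵥ (S *ᵥ x ζ)) ≤ -c₀ * (x ζ ⬝ᵥ x ζ) :=
  stmt13_general hn L hL1 ξ hξL H hHsum β κ ϱ hβ hκ Hd hHd P Q hQ S hS x hx
end

section
/- Let α, κ, β > 0 and λ_L > 0, λ_H ≥ 0 be constants. For ϱ > 0 define the symmetric 2×2 matrices P(ϱ) = (α/2)[[ϱ³+2ϱ+(α+1)/(αϱ), 1+ϱ²],[1+ϱ², ϱ]] and Q(ϱ) = κβ [[1+ϱ², ϱ/2],[ϱ/2, 0]], and let λ_P(ϱ) be the smallest eigenvalue of P(ϱ) and λ_Q(ϱ) the largest eigenvalue of −Q(ϱ). Then there exists ϱ₀ > 0 such that for all ϱ ∈ (0, ϱ₀), λ_P(ϱ)·λ_L − λ_Q(ϱ)·λ_H > 0. -/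
/-!
For a real symmetric 2×2 matrix `A` with `tr A > 0`, the shifted matrix `A - (det A / tr A) • 1`
has nonnegative diagonal and determinant `(det A / tr A)²`, so `det A / tr A` is a lower bound for
both eigenvalues; symmetrically it is an upper bound when `tr A < 0`. Since `det P(ϱ) = α / 4`,
this gives `λ_P(ϱ) ≥ αϱ / (2(αϱ⁴ + 3αϱ² + α + 1))`, which is of exact order `ϱ`, whereas
`λ_Q(ϱ) ≤ κβϱ² / (4(1 + ϱ²)) = O(ϱ²)`. So near `0` the term `λ_P(ϱ) λ_L` dominates.
-/

open Matrix Filter Topology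

namespace Matrix

section Shift

open scoped MatrixOrder ComplexOrder

variable {𝕜 n : Type*} [RCLike 𝕜] [Fintype n] [DecidableEq n] {A : Matrix n n 𝕜}

theorem IsHermitian.le_eigenvalues_of_posSemidef_sub (hA : A.IsHermitian) {c : ℝ}
    (h : (A - c • (1 : Matrix n n 𝕜)).PosSemidef) (i : n) : c ≤ hA.eigenvalues i := by
  have hle : algebraMap ℝ _ c ≤ A := by rwa [le_iff, Algebra.algebraMap_eq_smul_one]
  exact (algebraMap_le_iff_le_spectrum hA.isSelfAdjoint).mp hle _
    (hA.eigenvalues_mem_spectrum_real i)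

theorem IsHermitian.eigenvalues_le_of_posSemidef_sub (hA : A.IsHermitian) {c : ℝ}
    (h : (c • (1 : Matrix n n 𝕜) - A).PosSemidef) (i : n) : hA.eigenvalues i ≤ c := by
  have hle : A ≤ algebraMap ℝ _ c := by rwa [le_iff, Algebra.algebraMap_eq_smul_one]
  exact (le_algebraMap_iff_spectrum_le hA.isSelfAdjoint).mp hle _
    (hA.eigenvalues_mem_spectrum_real i)

end Shift

theorem posSemidef_fin_two {a b d : ℝ} (ha : 0 ≤ a) (hd : 0 ≤ d) (hb : b ^ 2 ≤ a * d) :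
    (!![a, b; b, d]).PosSemidef := by
  refine .of_dotProduct_mulVec_nonneg ?_ fun v => ?_
  · ext i j
    fin_cases i <;> fin_cases j <;> rfl
  simp only [star_trivial, dotProduct, mulVec, Fin.sum_univ_two, cons_val_zero, cons_val_one,
    of_apply]
  set x := v 0
  set y := v 1
  rcases (add_nonneg ha hd).eq_or_lt with had | had
  · obtain ⟨rfl, rfl⟩ : a = 0 ∧ d = 0 := ⟨by linarith, by linarith⟩
    obtain rfl : b = 0 := by nlinarith
    simp
  · refine nonneg_of_mul_nonneg_right (a := a + d) ?_ had
    have hdet : 0 ≤ a * d - b ^ 2 := sub_nonneg.2 hb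
    calc (0 : ℝ)
        ≤ (a * x + b * y) ^ 2 + (b * x + d * y) ^ 2 + (a * d - b ^ 2) * (x ^ 2 + y ^ 2) := by
          positivity
      _ = _ := by ring

section FinTwo

variable {A : Matrix (Fin 2) (Fin 2) ℝ}

theorem IsHermitian.posSemidef_sub_det_div_trace_smul_one_fin_two (hA : A.IsHermitian)
    (htr : 0 < A.trace) : (A - (A.det / A.trace) • 1).PosSemidef := by
  obtain ⟨p, q, r, rfl⟩ : ∃ p q r, A = !![p, q; q, r] :=
    ⟨A 0 0, A 0 1, A 1 1, (eta_fin_two A).trans (by rw [← hA.apply 1 0, star_trivial])⟩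
  rw [det_fin_two_of, trace_fin_two_of] at *
  set c := (p * r - q * q) / (p + r)
  have hc : c * (p + r) = p * r - q * q := div_mul_cancel₀ _ htr.ne'
  have hsub : !![p, q; q, r] - c • 1 = !![p - c, q; q, r - c] := by
    ext i j; fin_cases i <;> fin_cases j <;> simp
  rw [hsub]
  refine posSemidef_fin_two ?_ ?_ ?_
  all_goals nlinarith [sq_nonneg c, sq_nonneg p, sq_nonneg q, sq_nonneg r]

theorem IsHermitian.det_div_trace_le_eigenvalues_fin_two (hA : A.IsHermitian)
    (htr : 0 < A.trace) (i : Fin 2) : A.det / A.trace ≤ hA.eigenvalues i :=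
  hA.le_eigenvalues_of_posSemidef_sub (hA.posSemidef_sub_det_div_trace_smul_one_fin_two htr) i

theorem IsHermitian.eigenvalues_le_det_div_trace_fin_two (hA : A.IsHermitian)
    (htr : A.trace < 0) (i : Fin 2) : hA.eigenvalues i ≤ A.det / A.trace := by
  refine hA.eigenvalues_le_of_posSemidef_sub ?_ i
  have h := hA.neg.posSemidef_sub_det_div_trace_smul_one_fin_two (by rwa [trace_neg, neg_pos])
  rwa [det_neg, trace_neg, Fintype.card_fin, neg_one_sq, one_mul, div_neg, neg_smul,
    sub_neg_eq_add, add_comm, ← sub_eq_add_neg] at h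

end FinTwo

end Matrix

noncomputable def matrixP (α ϱ : ℝ) : Matrix (Fin 2) (Fin 2) ℝ :=
  (α / 2) • !![ϱ ^ 3 + 2 * ϱ + (α + 1) / (α * ϱ), 1 + ϱ ^ 2; 1 + ϱ ^ 2, ϱ]

noncomputable def matrixQ (κ β ϱ : ℝ) : Matrix (Fin 2) (Fin 2) ℝ :=
  (κ * β) • !![1 + ϱ ^ 2, ϱ / 2; ϱ / 2, 0]

section

variable {α κ β ϱ : ℝ}

theorem trace_matrixP_pos (hα : 0 < α) (hϱ : 0 < ϱ) : 0 < (matrixP α ϱ).trace := by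
  rw [matrixP, trace_smul, trace_fin_two_of, smul_eq_mul]
  positivity

theorem det_div_trace_matrixP (hα : α ≠ 0) (hϱ : ϱ ≠ 0) :
    (matrixP α ϱ).det / (matrixP α ϱ).trace =
      α * ϱ / (2 * (α * ϱ ^ 4 + 3 * α * ϱ ^ 2 + α + 1)) := by
  rw [matrixP, det_smul, trace_smul, det_fin_two_of, trace_fin_two_of, smul_eq_mul,
    Fintype.card_fin]
  field_simp
  ring

theorem trace_neg_matrixQ_neg (hκβ : 0 < κ * β) : (-matrixQ κ β ϱ).trace < 0 := by
  rw [matrixQ, trace_neg, trace_smul, trace_fin_two_of, smul_eq_mul, neg_neg_iff_pos]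
  positivity

theorem det_div_trace_neg_matrixQ :
    (-matrixQ κ β ϱ).det / (-matrixQ κ β ϱ).trace = κ * β * ϱ ^ 2 / (4 * (1 + ϱ ^ 2)) := by
  rw [matrixQ, det_neg, trace_neg, det_smul, trace_smul, det_fin_two_of, trace_fin_two_of,
    smul_eq_mul, Fintype.card_fin]
  field_simp
  ring

theorem eventually_det_div_trace_neg_matrixQ_lt (κ β lamH : ℝ) {lamL : ℝ} (hα : 0 < α)
    (hL : 0 < lamL) :
    ∀ᶠ ϱ in 𝓝[>] 0, lamH * ((-matrixQ κ β ϱ).det / (-matrixQ κ β ϱ).trace) <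
      lamL * ((matrixP α ϱ).det / (matrixP α ϱ).trace) := by
  have hg : Continuous fun ϱ : ℝ =>
      lamL * (α / (2 * (α * ϱ ^ 4 + 3 * α * ϱ ^ 2 + α + 1))) -
        lamH * (κ * β * ϱ / (4 * (1 + ϱ ^ 2))) := by
    fun_prop (disch := exact fun x => by positivity)
  have hg0 : 0 < lamL * (α / (2 * (α * 0 ^ 4 + 3 * α * 0 ^ 2 + α + 1))) -
        lamH * (κ * β * 0 / (4 * (1 + 0 ^ 2))) := by
    rw [mul_zero, zero_div, mul_zero, sub_zero]
    positivity
  filter_upwards [self_mem_nhdsWithin,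
    nhdsWithin_le_nhds (hg.tendsto 0 |>.eventually_const_lt hg0)] with ϱ (hϱ : 0 < ϱ) hgϱ
  rw [det_div_trace_matrixP hα.ne' hϱ.ne', det_div_trace_neg_matrixQ]
  linear_combination mul_pos hϱ hgϱ

end

/-- Let λ_P(ϱ) be the smallest eigenvalue of
P(ϱ) = (α/2)[[ϱ³+2ϱ+(α+1)/(αϱ), 1+ϱ²],[1+ϱ², ϱ]] and λ_Q(ϱ) the largest
eigenvalue of −Q(ϱ) with Q(ϱ) = κβ[[1+ϱ², ϱ/2],[ϱ/2, 0]]. Then for any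
constants λ_L > 0 and λ_H ≥ 0 there exists ϱ₀ > 0 such that
λ_P(ϱ)·λ_L − λ_Q(ϱ)·λ_H > 0 for all ϱ ∈ (0, ϱ₀). -/
theorem stmt14 (α κ β lamL lamH : ℝ)
    (hα : 0 < α) (hκ : 0 < κ) (hβ : 0 < β) (hL : 0 < lamL) (hHnn : 0 ≤ lamH)
    (P Q : ℝ → Matrix (Fin 2) (Fin 2) ℝ)
    (hP : ∀ ϱ, P ϱ =
      (α / 2) • !![ϱ ^ 3 + 2 * ϱ + (α + 1) / (α * ϱ), 1 + ϱ ^ 2; 1 + ϱ ^ 2, ϱ])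
    (hQ : ∀ ϱ, Q ϱ = (κ * β) • !![1 + ϱ ^ 2, ϱ / 2; ϱ / 2, 0])
    (hPh : ∀ ϱ, (P ϱ).IsHermitian) (hQh : ∀ ϱ, (-(Q ϱ)).IsHermitian) :
    ∃ ϱ₀ > (0 : ℝ), ∀ ϱ ∈ Set.Ioo (0 : ℝ) ϱ₀,
      0 < (⨅ i, (hPh ϱ).eigenvalues i) * lamL - (⨆ i, (hQh ϱ).eigenvalues i) * lamH := by
  have hP' : ∀ ϱ, P ϱ = matrixP α ϱ := hP
  have hQ' : ∀ ϱ, Q ϱ = matrixQ κ β ϱ := hQ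
  obtain ⟨ϱ₀, hϱ₀, hlt⟩ := (nhdsGT_basis 0).eventually_iff.mp
    (eventually_det_div_trace_neg_matrixQ_lt κ β lamH hα hL)
  refine ⟨ϱ₀, hϱ₀, fun ϱ hϱ => ?_⟩
  have hPϱ : (P ϱ).det / (P ϱ).trace ≤ ⨅ i, (hPh ϱ).eigenvalues i :=
    le_ciInf <| (hPh ϱ).det_div_trace_le_eigenvalues_fin_two <| by
      rw [hP']; exact trace_matrixP_pos hα hϱ.1
  have hQϱ : ⨆ i, (hQh ϱ).eigenvalues i ≤ (-Q ϱ).det / (-Q ϱ).trace :=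
    ciSup_le <| (hQh ϱ).eigenvalues_le_det_div_trace_fin_two <| by
      rw [hQ']; exact trace_neg_matrixQ_neg (mul_pos hκ hβ)
  have hdet := hlt hϱ
  rw [← hP', ← hQ'] at hdet
  linarith [mul_le_mul_of_nonneg_left hPϱ hL.le, mul_le_mul_of_nonneg_left hQϱ hHnn]
end
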